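/- Weak refinement is a precongruence with respect to parallel composition of abstract probabilistic event-clock automata: if E1 ≼_W E1' and E2 ≼_W E2', then E1 ∥ E2 ≼_W E1' ∥ E2'. -/

import Mathlib

/- ----------------------------------------------------------------------
   Common definitions: (abstract) probabilistic timed automata, region
   automata, satisfaction, refinement, divergence, pruning, abstraction,
   event-clock automata, conjunction and parallel composition.

   Guards (clock constraints) are represented semantically, as sets of
   clock valuations; probability constraints are represented by their
   satisfaction sets (the paper does not fix a constraint language).
   Regions are taken at the finest granularity (one valuation per
   region), so the region construction yields the (time-abstract)
   semantics of the automaton; the reset function ζ of a region label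
   is merged into the target distribution (a PA over the alphabet
   Θ(X) × A × (2^X)^S is represented by the structure `RPA` below,
   whose transitions carry a region label and a distribution over
   reset-set/state pairs).
   ---------------------------------------------------------------------- -/

open scoped Classical
open scoped NNReal ENNReal

noncomputable section

/-- Clock valuations over the clock set `X`. -/
abbrev Val (X : Type) := X → ℝ≥0

def valZero (X : Type) : Val X := fun _ => 0

/-- Letting time `t` elapse. -/
def valShift {X : Type} (v : Val X) (t : ℝ≥0) : Val X := fun x => v x + t

/-- Resetting the clocks in `Y` to zero. -/
def valReset {X : Type} (v : Val X) (Y : Set X) : Val X :=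
  fun x => if x ∈ Y then 0 else v x

/-- Clock constraints (guards) over `X`, represented semantically. -/
abbrev Guard (X : Type) := Set (Val X)

/-- The computed negation of a guard: a set of guards whose joint
complement is the guard. -/
def Guard.negSet {X : Type} (g : Guard X) : Set (Guard X) := {gᶜ}

/-- The three-valued complete lattice `⊥ < ? < ⊤` of modalities. -/
inductive B3 : Type
  | bot
  | may
  | must
deriving DecidableEq

/-- Probabilistic timed automata. -/
structure PTA (L A X AP : Type) where
  V : L → Set AP
  T : L → Guard X → A → PMF (Set X × L) → Prop
  init : L

/-- Abstract probabilistic timed automata: sets of admissible atomic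
propositions, three-valued edges, probability constraints (represented
by their sets of satisfying distributions). -/
structure APTA (L A X AP : Type) where
  V : L → Set (Set AP)
  T : L → Guard X → A → Set (PMF (Set X × L)) → B3
  init : L

/-- Probabilistic automata over the alphabet `Θ(X) × A × (2^X)^S`,
with the reset function of each label merged into the transition's
distribution (which therefore ranges over reset-set/state pairs). -/
structure RPA (S A X AP : Type) where
  V : S → Set AP
  T : S → Val X → A → PMF (Set X × S) → Prop
  init : S

/-- Abstract probabilistic automata over the alphabet
`Θ(X) × A × (2^X)^S` (see `RPA`). -/
structure RAPA (S A X AP : Type) where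
  V : S → Set (Set AP)
  T : S → Val X → A → Set (PMF (Set X × S)) → B3
  init : S

/-! ### Region construction -/

/-- Region automaton of a PTA, before restricting to reachable states. -/
def PTA.regionPre {L A X AP : Type} (M : PTA L A X AP) : RPA (L × Val X) A X AP where
  init := (M.init, valZero X)
  V := fun s => M.V s.1
  T := fun s v a μ' => ∃ g μ t, M.T s.1 g a μ ∧ v = valShift s.2 t ∧ v ∈ g ∧
        μ' = μ.map (fun p => (p.1, (p.2, valReset v p.1)))

/-- Reachability in an `RPA`. -/
inductive RPA.Reach {S A X AP : Type} (P : RPA S A X AP) : S → Prop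
  | init : RPA.Reach P P.init
  | step {s : S} {v : Val X} {a : A} {μ : PMF (Set X × S)} {Y : Set X} {s' : S} :
      RPA.Reach P s → P.T s v a μ → μ (Y, s') ≠ 0 → RPA.Reach P s'

/-- The region PA `R(M)` of a PTA `M` (transitions restricted to
reachable sources). -/
def PTA.region {L A X AP : Type} (M : PTA L A X AP) : RPA (L × Val X) A X AP where
  init := M.regionPre.init
  V := M.regionPre.V
  T := fun s v a μ => M.regionPre.Reach s ∧ M.regionPre.T s v a μ

/-- Lifting a probability constraint over `2^X × L` to region states. -/
def liftConstraint {X L : Type} (v : Val X) (φ : Set (PMF (Set X × L))) :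
    Set (PMF (Set X × (L × Val X))) :=
  (fun μ => μ.map (fun p => (p.1, (p.2, valReset v p.1)))) '' φ

/-- Region APA of an APTA, before restricting to reachable states. -/
def APTA.regionPre {L A X AP : Type} (𝒜 : APTA L A X AP) : RAPA (L × Val X) A X AP where
  init := (𝒜.init, valZero X)
  V := fun s => 𝒜.V s.1
  T := fun s v a φ' =>
    if ∃ g φ t, 𝒜.T s.1 g a φ = B3.must ∧ v = valShift s.2 t ∧ v ∈ g ∧
        φ' = liftConstraint v φ then B3.must
    else if ∃ g φ t, 𝒜.T s.1 g a φ ≠ B3.bot ∧ v = valShift s.2 t ∧ v ∈ g ∧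
        φ' = liftConstraint v φ then B3.may
    else B3.bot

/-- Reachability in an `RAPA`. -/
inductive RAPA.Reach {S A X AP : Type} (N : RAPA S A X AP) : S → Prop
  | init : RAPA.Reach N N.init
  | step {s : S} {v : Val X} {a : A} {φ : Set (PMF (Set X × S))} {μ : PMF (Set X × S)}
      {Y : Set X} {s' : S} :
      RAPA.Reach N s → N.T s v a φ ≠ B3.bot → μ ∈ φ → μ (Y, s') ≠ 0 → RAPA.Reach N s'

/-- The region APA `R(𝒜)` of an APTA `𝒜`. -/
def APTA.region {L A X AP : Type} (𝒜 : APTA L A X AP) : RAPA (L × Val X) A X AP where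
  init := 𝒜.regionPre.init
  V := 𝒜.regionPre.V
  T := fun s v a φ => if 𝒜.regionPre.Reach s then 𝒜.regionPre.T s v a φ else B3.bot

/-- The operator `𝒯` interpreting a PA over the alphabet
`Θ(X) × A × (2^X)^S` as a PTA. -/
def RPA.toPTA {S A X AP : Type} (P : RPA S A X AP) : PTA S A X AP where
  init := P.init
  V := P.V
  T := fun s g a μ => ∃ v, g = {v} ∧ P.T s v a μ

/-! ### Normal form -/

/-- The PTA `(𝒯 ∘ R)(M)` (fused). -/
def PTA.nf {L A X AP : Type} (M : PTA L A X AP) : PTA (L × Val X) A X AP where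
  init := (M.init, valZero X)
  V := fun s => M.V s.1
  T := fun s g a μ' => ∃ g₀ μ t, M.T s.1 g₀ a μ ∧ valShift s.2 t ∈ g₀ ∧
        g = {valShift s.2 t} ∧
        μ' = μ.map (fun p => (p.1, (p.2, valReset (valShift s.2 t) p.1)))

/-- Reachability of locations in a PTA. -/
inductive PTA.ReachLoc {L A X AP : Type} (M : PTA L A X AP) : L → Prop
  | init : PTA.ReachLoc M M.init
  | step {l : L} {g : Guard X} {a : A} {μ : PMF (Set X × L)} {Y : Set X} {l' : L} :
      PTA.ReachLoc M l → M.T l g a μ → μ (Y, l') ≠ 0 → PTA.ReachLoc M l'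

/-- A PTA is in normal form iff it is isomorphic to the reachable part
of `(𝒯 ∘ R)(M)`. -/
def PTA.NormalForm {L A X AP : Type} (M : PTA L A X AP) : Prop :=
  ∃ e : L → L × Val X, Function.Injective e ∧
    (∀ s, M.nf.ReachLoc s ↔ s ∈ Set.range e) ∧
    e M.init = M.nf.init ∧
    (∀ l, M.V l = M.nf.V (e l)) ∧
    (∀ l g a μ, M.T l g a μ ↔ M.nf.T (e l) g a (μ.map (Prod.map id e)))

/-! ### The lifting `⋐_R` of a relation to distributions -/

/-- `μ ⋐_R μ'`: lifting of `R` to distributions over reset-set/state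
pairs, via a correspondence (weight) function. -/
def distLift {X S S' : Type} (R : S → S' → Prop)
    (μ : PMF (Set X × S)) (μ' : PMF (Set X × S')) : Prop :=
  ∃ δ : Set X × S → Set X × S' → ℝ≥0∞,
    (∀ p, μ p ≠ 0 → ∑' q, δ p q = 1) ∧
    (∀ q, μ' q = ∑' p, μ p * δ p q) ∧
    (∀ p q, δ p q ≠ 0 → p.1 = q.1 ∧ R p.2 q.2)

/-- Lifting with a fixed correspondence function (used for strong
refinement). -/
def distLiftVia {X S S' : Type} (R : S → S' → Prop)
    (δ : Set X × S → Set X × S' → ℝ≥0∞)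
    (μ : PMF (Set X × S)) (μ' : PMF (Set X × S')) : Prop :=
  (∀ q, μ' q = ∑' p, μ p * δ p q) ∧
  (∀ p q, δ p q ≠ 0 → p.1 = q.1 ∧ R p.2 q.2)

/-! ### APA satisfaction and refinement (at the region level) -/

/-- Satisfaction relation between a PA and an APA. -/
def RPA.SatRel {S S' A X AP : Type} (M : RPA S A X AP) (N : RAPA S' A X AP)
    (R : S → S' → Prop) : Prop :=
  ∀ s s', R s s' →
    ((∀ v a φ', N.T s' v a φ' = B3.must →
        ∃ μ, M.T s v a μ ∧ ∃ μ' ∈ φ', distLift R μ μ') ∧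
     (∀ v a μ, M.T s v a μ →
        ∃ φ', N.T s' v a φ' ≠ B3.bot ∧ ∃ μ' ∈ φ', distLift R μ μ') ∧
     M.V s ∈ N.V s')

/-- `M ⊨ N` for a PA `M` and an APA `N`. -/
def RPA.Sat {S S' A X AP : Type} (M : RPA S A X AP) (N : RAPA S' A X AP) : Prop :=
  ∃ R, M.SatRel N R ∧ R M.init N.init

/-- Weak refinement relation between APAs. -/
def RAPA.WeakRefRel {S1 S2 A X AP : Type} (N1 : RAPA S1 A X AP) (N2 : RAPA S2 A X AP)
    (R : S1 → S2 → Prop) : Prop :=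
  ∀ s1 s2, R s1 s2 →
    ((∀ v a φ2, N2.T s2 v a φ2 = B3.must →
        ∃ φ1, N1.T s1 v a φ1 = B3.must ∧ ∀ μ1 ∈ φ1, ∃ μ2 ∈ φ2, distLift R μ1 μ2) ∧
     (∀ v a φ1, N1.T s1 v a φ1 ≠ B3.bot →
        ∃ φ2, N2.T s2 v a φ2 ≠ B3.bot ∧ ∀ μ1 ∈ φ1, ∃ μ2 ∈ φ2, distLift R μ1 μ2) ∧
     N1.V s1 ⊆ N2.V s2)

/-- Weak refinement `N1 ≼_W N2` of APAs. -/
def RAPA.WeakRef {S1 S2 A X AP : Type} (N1 : RAPA S1 A X AP) (N2 : RAPA S2 A X AP) : Prop :=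
  ∃ R, N1.WeakRefRel N2 R ∧ R N1.init N2.init

/-- Strong refinement relation between APAs: the correspondence
function is fixed per pair of transitions, uniformly over all
distributions. -/
def RAPA.StrongRefRel {S1 S2 A X AP : Type} (N1 : RAPA S1 A X AP) (N2 : RAPA S2 A X AP)
    (R : S1 → S2 → Prop) : Prop :=
  ∀ s1 s2, R s1 s2 →
    ((∀ v a φ2, N2.T s2 v a φ2 = B3.must →
        ∃ φ1, N1.T s1 v a φ1 = B3.must ∧
          ∃ δ, (∀ p, ∑' q, δ p q = 1) ∧
            ∀ μ1 ∈ φ1, ∃ μ2 ∈ φ2, distLiftVia R δ μ1 μ2) ∧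
     (∀ v a φ1, N1.T s1 v a φ1 ≠ B3.bot →
        ∃ φ2, N2.T s2 v a φ2 ≠ B3.bot ∧
          ∃ δ, (∀ p, ∑' q, δ p q = 1) ∧
            ∀ μ1 ∈ φ1, ∃ μ2 ∈ φ2, distLiftVia R δ μ1 μ2) ∧
     N1.V s1 ⊆ N2.V s2)

/-- Strong refinement `N1 ≼_S N2` of APAs. -/
def RAPA.StrongRef {S1 S2 A X AP : Type} (N1 : RAPA S1 A X AP) (N2 : RAPA S2 A X AP) : Prop :=
  ∃ R, N1.StrongRefRel N2 R ∧ R N1.init N2.init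

/-- Mutual weak refinement `≡`. -/
def RAPA.Equiv {S1 S2 A X AP : Type} (N1 : RAPA S1 A X AP) (N2 : RAPA S2 A X AP) : Prop :=
  N1.WeakRef N2 ∧ N2.WeakRef N1

/-! ### APTA satisfaction and refinements -/

/-- Satisfaction relation between a PTA in normal form and an APTA
(Def. "APTA Satisfaction"). -/
def APTA.SatRel {L L' A X AP : Type} (M : PTA L A X AP) (𝒜 : APTA L' A X AP)
    (R : L → L' → Prop) : Prop :=
  ∀ l l', R l l' →
    ((∀ (a : A) (φ' : Set (PMF (Set X × L'))) (g : Guard X) (θ : Val X),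
        𝒜.T l' g a φ' = B3.must →
        M.regionPre.Reach (l, θ) → 𝒜.regionPre.Reach (l', θ) →
        ∃ (n : ℕ) (gs : Fin n → Guard X) (μs : Fin n → PMF (Set X × L)),
          (∀ t : ℝ≥0, valShift θ t ∈ g → ∃ i, valShift θ t ∈ gs i) ∧
          (∀ i, M.T l (gs i) a (μs i) ∧ ∃ μ' ∈ φ', distLift R (μs i) μ')) ∧
     (∀ (a : A) (μ : PMF (Set X × L)) (g : Guard X),
        M.T l g a μ →
        ∃ (g' : Guard X) (φ' : Set (PMF (Set X × L'))),
          𝒜.T l' g' a φ' ≠ B3.bot ∧ g ⊆ g' ∧ ∃ μ' ∈ φ', distLift R μ μ') ∧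
     M.V l ∈ 𝒜.V l')

/-- `M ⊨ 𝒜` for a PTA `M` and an APTA `𝒜`. -/
def APTA.Sat {L L' A X AP : Type} (M : PTA L A X AP) (𝒜 : APTA L' A X AP) : Prop :=
  ∃ R, APTA.SatRel M 𝒜 R ∧ R M.init 𝒜.init

/-- An implementation of an APTA is a PTA in normal form satisfying it. -/
def APTA.Implements {L L' A X AP : Type} (M : PTA L A X AP) (𝒜 : APTA L' A X AP) : Prop :=
  M.NormalForm ∧ APTA.Sat M 𝒜

/-- Thorough refinement `𝒜1 ≼_T 𝒜2`: inclusion of implementation sets. -/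
def APTA.Thorough {L1 L2 A X AP : Type} (𝒜1 : APTA L1 A X AP) (𝒜2 : APTA L2 A X AP) : Prop :=
  ∀ (L' : Type) (M : PTA L' A X AP), APTA.Implements M 𝒜1 → APTA.Implements M 𝒜2

/-- Weak refinement `𝒜1 ≼_W 𝒜2` of APTAs: weak refinement of the region APAs. -/
def APTA.WeakRef {L1 L2 A X AP : Type} (𝒜1 : APTA L1 A X AP) (𝒜2 : APTA L2 A X AP) : Prop :=
  RAPA.WeakRef 𝒜1.region 𝒜2.region

/-- Strong refinement `𝒜1 ≼_S 𝒜2` of APTAs: strong refinement of the region APAs. -/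
def APTA.StrongRef {L1 L2 A X AP : Type} (𝒜1 : APTA L1 A X AP) (𝒜2 : APTA L2 A X AP) : Prop :=
  RAPA.StrongRef 𝒜1.region 𝒜2.region

/-! ### Consistency and pruning -/

/-- A location is consistent if its admissible labeling is nonempty and
all must-edges from it have satisfiable constraints. -/
def APTA.ConsistentLoc {L A X AP : Type} (𝒜 : APTA L A X AP) (l : L) : Prop :=
  𝒜.V l ≠ ∅ ∧ ∀ g a φ, 𝒜.T l g a φ = B3.must → φ.Nonempty

/-- Restricting a constraint to distributions that avoid inconsistent
locations. -/
def APTA.pruneConstraint {L A X AP : Type} (𝒜 : APTA L A X AP)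
    (φ : Set (PMF (Set X × L))) : Set (PMF (Set X × L)) :=
  {μ ∈ φ | ∀ Y l', ¬ 𝒜.ConsistentLoc l' → μ (Y, l') = 0}

/-- The pruning operator `β`. -/
def APTA.prune {L A X AP : Type} (𝒜 : APTA L A X AP) : APTA L A X AP where
  init := 𝒜.init
  V := fun l => if 𝒜.ConsistentLoc l then 𝒜.V l else ∅
  T := fun l g a φ' =>
    if 𝒜.ConsistentLoc l ∧ ∃ φ, 𝒜.T l g a φ = B3.must ∧ φ' = 𝒜.pruneConstraint φ
    then B3.must
    else if 𝒜.ConsistentLoc l ∧ ∃ φ, 𝒜.T l g a φ = B3.may ∧ φ' = 𝒜.pruneConstraint φ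
    then B3.may
    else B3.bot

/-- `β*`: the fixpoint of `β`, reached after finitely many iterations
(at most `|L| + 1`). -/
def APTA.pruneStar {L A X AP : Type} [Fintype L] (𝒜 : APTA L A X AP) : APTA L A X AP :=
  (fun B : APTA L A X AP => B.prune)^[Fintype.card L + 1] 𝒜

/-! ### Time divergence -/

/-- Infinite paths of a PTA. -/
structure PTA.InfPath {L A X AP : Type} (M : PTA L A X AP) where
  loc : ℕ → L
  val : ℕ → Val X
  del : ℕ → ℝ≥0
  init_loc : loc 0 = M.init
  init_val : val 0 = valZero X
  step : ∀ n, ∃ g a μ Y, M.T (loc n) g a μ ∧ valShift (val n) (del n) ∈ g ∧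
    μ (Y, loc (n + 1)) ≠ 0 ∧ val (n + 1) = valReset (valShift (val n) (del n)) Y

/-- Strict divergence: time diverges along every infinite path. -/
def PTA.StrictDivergent {L A X AP : Type} (M : PTA L A X AP) : Prop :=
  ∀ π : M.InfPath, ∀ c : ℝ≥0, ∃ n, c < ∑ i ∈ Finset.range n, π.del i

/-- Schedulers: given the history (configurations and delays) and the
current configuration, choose a delay and a probabilistic edge. -/
def Sched (L A X : Type) :=
  List ((L × Val X) × ℝ≥0) → (L × Val X) → ℝ≥0 × Guard X × A × PMF (Set X × L)

/-- A scheduler is valid if it always chooses an enabled edge of `M`. -/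
def ValidSched {L A X AP : Type} (M : PTA L A X AP) (σ : Sched L A X) : Prop :=
  ∀ h c, M.T c.1 (σ h c).2.1 (σ h c).2.2.1 (σ h c).2.2.2 ∧
    valShift c.2 (σ h c).1 ∈ (σ h c).2.1

/-- One scheduler step. -/
def schedStep {L A X : Type} (σ : Sched L A X)
    (x : List ((L × Val X) × ℝ≥0) × (L × Val X)) :
    PMF (List ((L × Val X) × ℝ≥0) × (L × Val X)) :=
  ((σ x.1 x.2).2.2.2).map fun p =>
    (x.1 ++ [(x.2, (σ x.1 x.2).1)], (p.2, valReset (valShift x.2.2 (σ x.1 x.2).1) p.1))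

/-- The distribution over histories after `n` scheduler steps. -/
def runPMF {L A X AP : Type} (M : PTA L A X AP) (σ : Sched L A X) :
    ℕ → PMF (List ((L × Val X) × ℝ≥0) × (L × Val X))
  | 0 => PMF.pure ([], (M.init, valZero X))
  | n + 1 => (runPMF M σ n).bind (schedStep σ)

/-- Total time elapsed along a history. -/
def elapsed {L X : Type} (h : List ((L × Val X) × ℝ≥0)) : ℝ≥0 :=
  (h.map Prod.snd).sum

/-- Probabilistic divergence: under every (valid) scheduler, time
diverges with probability 1; equivalently, for every bound `c` the
probability that at most `c` time units have elapsed after `n` steps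
tends to `0`. -/
def PTA.ProbDivergent {L A X AP : Type} (M : PTA L A X AP) : Prop :=
  ∀ σ : Sched L A X, ValidSched M σ → ∀ c : ℝ≥0,
    Filter.Tendsto (fun n => (runPMF M σ n).toOuterMeasure {x | elapsed x.1 ≤ c})
      Filter.atTop (nhds 0)

/-- Sd-thorough refinement: inclusion of the sets of strict divergent
implementations. -/
def APTA.ThoroughSd {L1 L2 A X AP : Type} (𝒜1 : APTA L1 A X AP) (𝒜2 : APTA L2 A X AP) : Prop :=
  ∀ (L' : Type) (M : PTA L' A X AP),
    (APTA.Implements M 𝒜1 ∧ M.StrictDivergent) → (APTA.Implements M 𝒜2 ∧ M.StrictDivergent)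

/-- Pd-thorough refinement: inclusion of the sets of probabilistic
divergent implementations. -/
def APTA.ThoroughPd {L1 L2 A X AP : Type} (𝒜1 : APTA L1 A X AP) (𝒜2 : APTA L2 A X AP) : Prop :=
  ∀ (L' : Type) (M : PTA L' A X AP),
    (APTA.Implements M 𝒜1 ∧ M.ProbDivergent) → (APTA.Implements M 𝒜2 ∧ M.ProbDivergent)

/-! ### PTAs as APTAs, and probabilistic time-abstracting bisimulation -/

/-- A PTA viewed as an APTA: only must-edges, point-valued labelings,
constraints with singleton satisfaction sets. -/
def PTA.toAPTA {L A X AP : Type} (M : PTA L A X AP) : APTA L A X AP where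
  init := M.init
  V := fun l => {M.V l}
  T := fun l g a φ => if ∃ μ, M.T l g a μ ∧ φ = {μ} then B3.must else B3.bot

/-- Disjoint union of two PTAs. -/
def PTA.sum {L1 L2 A X AP : Type} (M1 : PTA L1 A X AP) (M2 : PTA L2 A X AP) :
    PTA (L1 ⊕ L2) A X AP where
  init := Sum.inl M1.init
  V := Sum.elim M1.V M2.V
  T := fun l g a μ =>
    (∃ l1 μ1, l = Sum.inl l1 ∧ M1.T l1 g a μ1 ∧ μ = μ1.map (Prod.map id Sum.inl)) ∨
    (∃ l2 μ2, l = Sum.inr l2 ∧ M2.T l2 g a μ2 ∧ μ = μ2.map (Prod.map id Sum.inr))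

/-- A set of configurations is closed under an equivalence. -/
def EClosed {C : Type} (E : C → C → Prop) (s : Set C) : Prop :=
  ∀ x y, E x y → (x ∈ s ↔ y ∈ s)

/-- Probabilistic time-abstracting bisimulations on the configurations
of a PTA. -/
def PTA.IsBisim {L A X AP : Type} (M : PTA L A X AP)
    (E : (L × Val X) → (L × Val X) → Prop) : Prop :=
  Equivalence E ∧
  ∀ c c', E c c' →
    (M.V c.1 = M.V c'.1 ∧
     ∀ (g : Guard X) (a : A) (μ : PMF (Set X × L)) (t : ℝ≥0),
       M.T c.1 g a μ → valShift c.2 t ∈ g →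
       ∃ (g' : Guard X) (μ' : PMF (Set X × L)) (t' : ℝ≥0),
         M.T c'.1 g' a μ' ∧ valShift c'.2 t' ∈ g' ∧
         ∀ s : Set (L × Val X), EClosed E s →
           ((μ.map fun p => (p.2, valReset (valShift c.2 t) p.1)).toOuterMeasure s =
            (μ'.map fun p => (p.2, valReset (valShift c'.2 t') p.1)).toOuterMeasure s))

/-- `M1 ∼ M2`: probabilistic time-abstracting bisimilarity. -/
def PTA.Bisimilar {L1 L2 A X AP : Type} (M1 : PTA L1 A X AP) (M2 : PTA L2 A X AP) : Prop :=
  ∃ E, (M1.sum M2).IsBisim E ∧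
    E (Sum.inl M1.init, valZero X) (Sum.inr M2.init, valZero X)

/-! ### Determinism -/

/-- Action-determinism: transitions of a reachable region state on the
same action with different constraints have disjoint regions. -/
def APTA.ActionDet {L A X AP : Type} (𝒜 : APTA L A X AP) : Prop :=
  ∀ s v1 v2 a φ1 φ2, 𝒜.region.T s v1 a φ1 ≠ B3.bot → 𝒜.region.T s v2 a φ2 ≠ B3.bot →
    φ1 ≠ φ2 → v1 ≠ v2

/-- AP-determinism. -/
def APTA.APDet {L A X AP : Type} (𝒜 : APTA L A X AP) : Prop :=
  ∀ s v a φ, 𝒜.region.T s v a φ ≠ B3.bot →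
    ∀ μ' ∈ φ, ∀ μ'' ∈ φ, ∀ (Y' : Set X) s' (Y'' : Set X) s'', s' ≠ s'' →
      μ' (Y', s') ≠ 0 → μ'' (Y'', s'') ≠ 0 → 𝒜.region.V s' ∩ 𝒜.region.V s'' = ∅

def APTA.Deterministic {L A X AP : Type} (𝒜 : APTA L A X AP) : Prop :=
  𝒜.ActionDet ∧ 𝒜.APDet

/-! ### Abstraction for APTAs -/

/-- The common guard `g(l̃, a)` of the must-edges of all concretizations
of `l̃`. -/
def APTA.commonGuard {L Lt A X AP : Type} (𝒜 : APTA L A X AP) (α : L → Lt)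
    (lt : Lt) (a : A) : Guard X :=
  if ∀ l, α l = lt → ∃ g φ, 𝒜.T l g a φ = B3.must
  then ⋂₀ {g | ∃ l, α l = lt ∧ ∃ φ, 𝒜.T l g a φ = B3.must}
  else ∅

/-- The pre-processing `𝒫_α`: every must-edge is split along the common
guard and its computed negation. -/
def APTA.preprocess {L Lt A X AP : Type} (𝒜 : APTA L A X AP) (α : L → Lt) :
    APTA L A X AP where
  init := 𝒜.init
  V := 𝒜.V
  T := fun l g a φ =>
    if ∃ g₀, 𝒜.T l g₀ a φ = B3.must ∧
        (g = 𝒜.commonGuard α (α l) a ∨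
         ∃ g' ∈ Guard.negSet (𝒜.commonGuard α (α l) a), g = g₀ ∩ g')
    then B3.must
    else if 𝒜.T l g a φ = B3.may then B3.may
    else B3.bot

/-- APTA abstraction (applied to a pre-processed APTA). -/
def APTA.abstr {L Lt A X AP : Type} (𝒜 : APTA L A X AP) (α : L → Lt) :
    APTA Lt A X AP where
  init := α 𝒜.init
  V := fun lt => {P | ∃ l, α l = lt ∧ P ∈ 𝒜.V l}
  T := fun lt g a φt =>
    if g = 𝒜.commonGuard α lt a ∧
        φt = (fun μ => μ.map (Prod.map id α)) ''
          ⋃₀ {φ | ∃ l, α l = lt ∧ 𝒜.T l g a φ = B3.must}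
    then B3.must
    else if g ≠ 𝒜.commonGuard α lt a ∧ (∃ l φ, α l = lt ∧ 𝒜.T l g a φ ≠ B3.bot) ∧
        φt = (fun μ => μ.map (Prod.map id α)) ''
          ⋃₀ {φ | ∃ l, α l = lt ∧ 𝒜.T l g a φ ≠ B3.bot}
    then B3.may
    else B3.bot

/-- Pre-processing at the APA level. Since every transition of a region
APA is guarded by a single region, guard splitting is trivial there. -/
def RAPA.preprocess {S St A X AP : Type} (N : RAPA S A X AP) (_α : S → St) :
    RAPA S A X AP := N

/-- APA abstraction (cf. DKLLPSW11): must if all concretizations have a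
must-transition with the given label, may if some has a non-⊥ one. -/
def RAPA.abstr {S St A X AP : Type} (N : RAPA S A X AP) (α : S → St) :
    RAPA St A X AP where
  init := α N.init
  V := fun st => {P | ∃ s, α s = st ∧ P ∈ N.V s}
  T := fun st v a φt =>
    if (∀ s, α s = st → ∃ φ, N.T s v a φ = B3.must) ∧
        φt = (fun μ => μ.map (Prod.map id α)) ''
          ⋃₀ {φ | ∃ s, α s = st ∧ N.T s v a φ = B3.must}
    then B3.must
    else if ¬ (∀ s, α s = st → ∃ φ, N.T s v a φ = B3.must) ∧
        (∃ s φ, α s = st ∧ N.T s v a φ ≠ B3.bot) ∧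
        φt = (fun μ => μ.map (Prod.map id α)) ''
          ⋃₀ {φ | ∃ s, α s = st ∧ N.T s v a φ ≠ B3.bot}
    then B3.may
    else B3.bot

/-! ### Abstract probabilistic event-clock automata -/

/-- Abstract probabilistic event-clock automata: one clock `x_a` per
action `a` (so the clock set is identified with the action set `A`),
and probability constraints directly over locations. -/
structure APECA (L A AP : Type) where
  V : L → Set (Set AP)
  T : L → Guard A → A → Set (PMF L) → B3
  init : L

/-- Completeness of the edge function: for every location and action the
guards of the non-⊥ edges cover `true`. -/
def APECA.Complete {L A AP : Type} (E : APECA L A AP) : Prop :=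
  ∀ l a (v : Val A), ∃ g φ, E.T l g a φ ≠ B3.bot ∧ v ∈ g

/-- An APECA as an APTA: the occurrence of `a` resets exactly the clock
`x_a`. -/
def APECA.toAPTA {L A AP : Type} (E : APECA L A AP) : APTA L A A AP where
  init := E.init
  V := E.V
  T := fun l g a φh =>
    if ∃ φ, E.T l g a φ = B3.must ∧
        φh = (fun μ => μ.map fun l' => (({a} : Set A), l')) '' φ
    then B3.must
    else if ∃ φ, E.T l g a φ = B3.may ∧
        φh = (fun μ => μ.map fun l' => (({a} : Set A), l')) '' φ
    then B3.may
    else B3.bot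

/-- The region APA of an APECA. -/
def APECA.region {L A AP : Type} (E : APECA L A AP) : RAPA (L × Val A) A A AP :=
  E.toAPTA.region

/-- Weak refinement of APECAs: weak APA refinement of the region APAs. -/
def APECA.WeakRef {L1 L2 A AP : Type} (E1 : APECA L1 A AP) (E2 : APECA L2 A AP) : Prop :=
  RAPA.WeakRef E1.region E2.region

/-- Action-determinism for APECAs. -/
def APECA.ActionDet {L A AP : Type} (E : APECA L A AP) : Prop :=
  ∀ s v1 v2 a φ1 φ2, E.region.T s v1 a φ1 ≠ B3.bot → E.region.T s v2 a φ2 ≠ B3.bot →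
    φ1 ≠ φ2 → v1 ≠ v2

/-- Consistency: existence of at least one implementation. -/
def APECA.Consistent {L A AP : Type} (E : APECA L A AP) : Prop :=
  ∃ (L' : Type) (M : PTA L' A A AP), APTA.Implements M E.toAPTA

/-- Implementation of an APECA. -/
def APECA.Implements {L' L A AP : Type} (M : PTA L' A A AP) (E : APECA L A AP) : Prop :=
  APTA.Implements M E.toAPTA

/-- Disjointness of the atomic-proposition alphabets of two APECAs. -/
def APDisjoint {L1 L2 A AP : Type} (E1 : APECA L1 A AP) (E2 : APECA L2 A AP) : Prop :=
  ∀ l1 l2 P1 P2, P1 ∈ E1.V l1 → P2 ∈ E2.V l2 → P1 ∩ P2 = ∅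

/-! ### Conjunction -/

/-- The conjunction `φ∧` of two constraints: a distribution satisfies it
iff its marginals satisfy the component constraints. -/
def conjConstraint {L1 L2 : Type} (φ1 : Set (PMF L1)) (φ2 : Set (PMF L2)) :
    Set (PMF (L1 × L2)) :=
  {μ | μ.map Prod.fst ∈ φ1 ∧ μ.map Prod.snd ∈ φ2}

/-- Conjunction of APECAs. -/
def APECA.conj {L1 L2 A AP : Type} (E1 : APECA L1 A AP) (E2 : APECA L2 A AP) :
    APECA (L1 × L2) A AP where
  init := (E1.init, E2.init)
  V := fun p => E1.V p.1 ∩ E2.V p.2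
  T := fun p g a φ =>
    if ∃ g1 g2 φ1 φ2, E1.T p.1 g1 a φ1 ≠ B3.bot ∧ E2.T p.2 g2 a φ2 ≠ B3.bot ∧
        g = g1 ∩ g2 ∧ φ = conjConstraint φ1 φ2 ∧
        (E1.T p.1 g1 a φ1 = B3.must ∨ E2.T p.2 g2 a φ2 = B3.must)
    then B3.must
    else if ∃ g1 g2 φ1 φ2, E1.T p.1 g1 a φ1 ≠ B3.bot ∧ E2.T p.2 g2 a φ2 ≠ B3.bot ∧
        g = g1 ∩ g2 ∧ φ = conjConstraint φ1 φ2
    then B3.may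
    else B3.bot

/-- Conjunction of constraints at the region level (with reset sets). -/
def conjConstraintR {X S1 S2 : Type} (φ1 : Set (PMF (Set X × S1)))
    (φ2 : Set (PMF (Set X × S2))) : Set (PMF (Set X × (S1 × S2))) :=
  {μ | μ.map (fun p => (p.1, p.2.1)) ∈ φ1 ∧ μ.map (fun p => (p.1, p.2.2)) ∈ φ2}

/-- Conjunction of APAs (region level). -/
def RAPA.conj {S1 S2 A X AP : Type} (N1 : RAPA S1 A X AP) (N2 : RAPA S2 A X AP) :
    RAPA (S1 × S2) A X AP where
  init := (N1.init, N2.init)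
  V := fun p => N1.V p.1 ∩ N2.V p.2
  T := fun p v a φ =>
    if ∃ φ1 φ2, N1.T p.1 v a φ1 ≠ B3.bot ∧ N2.T p.2 v a φ2 ≠ B3.bot ∧
        φ = conjConstraintR φ1 φ2 ∧
        (N1.T p.1 v a φ1 = B3.must ∨ N2.T p.2 v a φ2 = B3.must)
    then B3.must
    else if ∃ φ1 φ2, N1.T p.1 v a φ1 ≠ B3.bot ∧ N2.T p.2 v a φ2 ≠ B3.bot ∧
        φ = conjConstraintR φ1 φ2
    then B3.may
    else B3.bot

/-! ### Pruning for APECAs -/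

def APECA.ConsistentLoc {L A AP : Type} (E : APECA L A AP) (l : L) : Prop :=
  E.V l ≠ ∅ ∧ ∀ g a φ, E.T l g a φ = B3.must → φ.Nonempty

def APECA.pruneConstraint {L A AP : Type} (E : APECA L A AP) (φ : Set (PMF L)) :
    Set (PMF L) :=
  {μ ∈ φ | ∀ l', ¬ E.ConsistentLoc l' → μ l' = 0}

def APECA.prune {L A AP : Type} (E : APECA L A AP) : APECA L A AP where
  init := E.init
  V := fun l => if E.ConsistentLoc l then E.V l else ∅
  T := fun l g a φ' =>
    if E.ConsistentLoc l ∧ ∃ φ, E.T l g a φ = B3.must ∧ φ' = E.pruneConstraint φ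
    then B3.must
    else if E.ConsistentLoc l ∧ ∃ φ, E.T l g a φ = B3.may ∧ φ' = E.pruneConstraint φ
    then B3.may
    else B3.bot

def APECA.pruneStar {L A AP : Type} [Fintype L] (E : APECA L A AP) : APECA L A AP :=
  (fun B : APECA L A AP => B.prune)^[Fintype.card L + 1] E

/-! ### Parallel composition -/

/-- The parallel constraint `φ∥`: product distributions of satisfying
pairs. -/
def parConstraint {L1 L2 : Type} (φ1 : Set (PMF L1)) (φ2 : Set (PMF L2)) :
    Set (PMF (L1 × L2)) :=
  {μ | ∃ μ1 ∈ φ1, ∃ μ2 ∈ φ2, ∀ k1 k2, μ (k1, k2) = μ1 k1 * μ2 k2}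

/-- Parallel composition of APECAs (over the same action set). -/
def APECA.par {L1 L2 A AP : Type} (E1 : APECA L1 A AP) (E2 : APECA L2 A AP) :
    APECA (L1 × L2) A AP where
  init := (E1.init, E2.init)
  V := fun p => {Q | ∃ P1 ∈ E1.V p.1, ∃ P2 ∈ E2.V p.2, Q = P1 ∪ P2}
  T := fun p g a φ =>
    if ∃ g1 g2 φ1 φ2, E1.T p.1 g1 a φ1 = B3.must ∧ E2.T p.2 g2 a φ2 = B3.must ∧
        g = g1 ∩ g2 ∧ φ = parConstraint φ1 φ2
    then B3.must
    else if ∃ g1 g2 φ1 φ2, E1.T p.1 g1 a φ1 ≠ B3.bot ∧ E2.T p.2 g2 a φ2 ≠ B3.bot ∧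
        g = g1 ∩ g2 ∧ φ = parConstraint φ1 φ2
    then B3.may
    else B3.bot

/-- Parallel constraint at the region level: products, with resets
combined by union. -/
def parConstraintR {X S1 S2 : Type} (φ1 : Set (PMF (Set X × S1)))
    (φ2 : Set (PMF (Set X × S2))) : Set (PMF (Set X × (S1 × S2))) :=
  {μ | ∃ μ1 ∈ φ1, ∃ μ2 ∈ φ2,
    μ = μ1.bind fun p => μ2.map fun q => (p.1 ∪ q.1, (p.2, q.2))}

/-- Parallel composition of APAs (region level). -/
def RAPA.par {S1 S2 A X AP : Type} (N1 : RAPA S1 A X AP) (N2 : RAPA S2 A X AP) :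
    RAPA (S1 × S2) A X AP where
  init := (N1.init, N2.init)
  V := fun p => {Q | ∃ P1 ∈ N1.V p.1, ∃ P2 ∈ N2.V p.2, Q = P1 ∪ P2}
  T := fun p v a φ =>
    if ∃ φ1 φ2, N1.T p.1 v a φ1 = B3.must ∧ N2.T p.2 v a φ2 = B3.must ∧
        φ = parConstraintR φ1 φ2
    then B3.must
    else if ∃ φ1 φ2, N1.T p.1 v a φ1 ≠ B3.bot ∧ N2.T p.2 v a φ2 ≠ B3.bot ∧
        φ = parConstraintR φ1 φ2
    then B3.may
    else B3.bot

/-! ### Abstraction for APECAs -/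

def APECA.commonGuard {L Lt A AP : Type} (E : APECA L A AP) (α : L → Lt)
    (lt : Lt) (a : A) : Guard A :=
  if ∀ l, α l = lt → ∃ g φ, E.T l g a φ = B3.must
  then ⋂₀ {g | ∃ l, α l = lt ∧ ∃ φ, E.T l g a φ = B3.must}
  else ∅

def APECA.preprocess {L Lt A AP : Type} (E : APECA L A AP) (α : L → Lt) :
    APECA L A AP where
  init := E.init
  V := E.V
  T := fun l g a φ =>
    if ∃ g₀, E.T l g₀ a φ = B3.must ∧
        (g = E.commonGuard α (α l) a ∨
         ∃ g' ∈ Guard.negSet (E.commonGuard α (α l) a), g = g₀ ∩ g')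
    then B3.must
    else if E.T l g a φ = B3.may then B3.may
    else B3.bot

def APECA.abstr {L Lt A AP : Type} (E : APECA L A AP) (α : L → Lt) :
    APECA Lt A AP where
  init := α E.init
  V := fun lt => {P | ∃ l, α l = lt ∧ P ∈ E.V l}
  T := fun lt g a φt =>
    if g = E.commonGuard α lt a ∧
        φt = (fun μ => μ.map α) '' ⋃₀ {φ | ∃ l, α l = lt ∧ E.T l g a φ = B3.must}
    then B3.must
    else if g ≠ E.commonGuard α lt a ∧ (∃ l φ, α l = lt ∧ E.T l g a φ ≠ B3.bot) ∧
        φt = (fun μ => μ.map α) '' ⋃₀ {φ | ∃ l, α l = lt ∧ E.T l g a φ ≠ B3.bot}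
    then B3.may
    else B3.bot

end

/-!
The refinement relation for the compositions is the componentwise product of the two given
relations, restricted to reachable region states. A region transition of `E1 ∥ E2` is exactly a
pair of component transitions at the same valuation, with the product constraint and the meet of
the two modalities, so must- and may-transitions decompose and recompose componentwise. On
distributions, the product of the two component weight functions witnesses the lifting between the
product distributions: its row sums and column identities factor into those of the components.
-/

noncomputable section

open Function

def B3.rank : B3 → ℕ
  | B3.bot => 0
  | B3.may => 1
  | B3.must => 2

/-- The order `⊥ < ? < ⊤`. Writing `m ≤ T …` with `m = must` resp. `m = may` treats
must-transitions and non-`⊥` transitions uniformly. -/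
instance : LinearOrder B3 :=
  LinearOrder.lift' B3.rank fun x y h => by cases x <;> cases y <;> first | rfl | cases h

theorem B3.must_le_iff {x : B3} : B3.must ≤ x ↔ x = B3.must := by
  cases x <;> decide

theorem B3.may_le_iff {x : B3} : B3.may ≤ x ↔ x ≠ B3.bot := by
  cases x <;> decide

theorem B3.ne_bot_iff {x : B3} : x ≠ B3.bot ↔ x = B3.may ∨ x = B3.must := by
  cases x <;> decide

theorem ENNReal.tsum_prod_mul {α β : Type*} (f : α → ℝ≥0∞) (g : β → ℝ≥0∞) :
    ∑' k : α × β, f k.1 * g k.2 = (∑' a, f a) * ∑' b, g b := by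
  simp_rw [ENNReal.tsum_prod', ENNReal.tsum_mul_left, ENNReal.tsum_mul_right]

namespace PMF

variable {α β γ κ : Type*}

theorem map_apply_of_notMem_range {f : α → β} (μ : PMF α) {y : β} (hy : ¬∃ x, f x = y) :
    μ.map f y = 0 := by
  rw [map_apply]
  exact ENNReal.tsum_eq_zero.2 fun x => if_neg fun h => hy ⟨x, h.symm⟩

theorem map_apply_of_injective {f : α → β} (hf : Injective f) (μ : PMF α) (x : α) :
    μ.map f (f x) = μ x := by
  rw [map_apply, tsum_eq_single x fun x' hx' => if_neg fun h => hx' (hf h.symm), if_pos rfl]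

def prod (μ : PMF α) (ν : PMF β) : PMF (α × β) :=
  ⟨fun k => μ k.1 * ν k.2, ENNReal.summable.hasSum_iff.2 <| by simp [ENNReal.tsum_prod_mul]⟩

@[simp]
theorem prod_apply (μ : PMF α) (ν : PMF β) (k : α × β) : μ.prod ν k = μ k.1 * ν k.2 := rfl

/-- The lifting `⋐_r` of a relation to distributions, for arbitrary carriers (`distLift` is the
case of reset-set/state pairs). -/
def WeightLift (r : α → β → Prop) (μ : PMF α) (ν : PMF β) : Prop :=
  ∃ w : α → β → ℝ≥0∞, (∀ a, μ a ≠ 0 → ∑' b, w a b = 1) ∧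
    (∀ b, ν b = ∑' a, μ a * w a b) ∧ ∀ a b, w a b ≠ 0 → r a b

variable {r : α → β → Prop} {μ : PMF α} {ν : PMF β}

theorem WeightLift.mono {r' : α → β → Prop} (h : WeightLift r μ ν)
    (hr : ∀ a b, r a b → r' a b) : WeightLift r' μ ν :=
  let ⟨w, hrow, hcol, hw⟩ := h
  ⟨w, hrow, hcol, fun a b hab => hr a b (hw a b hab)⟩

theorem WeightLift.restrict_support (h : WeightLift r μ ν) :
    WeightLift (fun a b => μ a ≠ 0 ∧ ν b ≠ 0 ∧ r a b) μ ν := by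
  obtain ⟨w, hrow, hcol, hw⟩ := h
  refine ⟨fun a b => if μ a = 0 then 0 else w a b, fun a ha => by simp [ha, hrow a ha],
    fun b => by rw [hcol]; exact tsum_congr fun a => by by_cases ha : μ a = 0 <;> simp [ha],
    fun a b hab => ?_⟩
  have hμ : μ a ≠ 0 := fun ha => hab (if_pos ha)
  have hab' : w a b ≠ 0 := by simpa [hμ] using hab
  -- `μ a * w a b` is one of the summands of `ν b`
  refine ⟨hμ, fun hν => mul_ne_zero hμ hab' ?_, hw a b hab'⟩
  exact ENNReal.tsum_eq_zero.1 ((hcol b).symm.trans hν) a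

theorem WeightLift.comap {f : α → γ} {g : β → κ} (hf : Injective f) (hg : Injective g)
    {r : γ → κ → Prop} (h : WeightLift r (μ.map f) (ν.map g)) :
    WeightLift (fun a b => r (f a) (g b)) μ ν := by
  obtain ⟨w, hrow, hcol, hw⟩ := h
  have hzero : ∀ a y, μ a ≠ 0 → (¬∃ b, g b = y) → w (f a) y = 0 := by
    intro a y ha hy
    have := ENNReal.tsum_eq_zero.1 ((hcol y).symm.trans (map_apply_of_notMem_range ν hy)) (f a)
    simpa [map_apply_of_injective hf, ha] using this
  refine ⟨fun a b => w (f a) (g b), fun a ha => ?_, fun b => ?_, fun a b hab => hw _ _ hab⟩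
  · rw [← hrow (f a) (by rwa [map_apply_of_injective hf])]
    exact hg.tsum_eq fun y hy => by_contra fun h => hy (hzero a y ha h)
  · rw [← map_apply_of_injective hg, hcol]
    refine (hf.tsum_eq fun x hx => ?_).symm.trans
      (tsum_congr fun a => by rw [map_apply_of_injective hf])
    by_contra h
    exact hx (by simp only [map_apply_of_notMem_range μ h, zero_mul])

theorem WeightLift.map {f : α → γ} {g : β → κ} (hf : Injective f) (hg : Injective g)
    {r' : γ → κ → Prop} (h : WeightLift r μ ν) (hr : ∀ a b, r a b → r' (f a) (g b)) :
    WeightLift r' (μ.map f) (ν.map g) := by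
  obtain ⟨w, hrow, hcol, hw⟩ := h
  set w' := extend f (fun a => extend g (w a) 0) 0
  have hw'_apply : ∀ a b, w' (f a) (g b) = w a b := fun a b => by
    simp only [w', hf.extend_apply, hg.extend_apply]
  have hw'_ne_zero : ∀ x y, w' x y ≠ 0 → ∃ a b, f a = x ∧ g b = y ∧ w a b ≠ 0 := by
    intro x y hxy
    by_contra! hne
    refine hxy ?_
    by_cases hx : ∃ a, f a = x
    · obtain ⟨a, rfl⟩ := hx
      by_cases hy : ∃ b, g b = y
      · obtain ⟨b, rfl⟩ := hy
        rw [hw'_apply, hne a b rfl rfl]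
      · simp only [w', hf.extend_apply, extend_apply' _ _ _ hy, Pi.zero_apply]
    · simp only [w', extend_apply' _ _ _ hx, Pi.zero_apply]
  refine ⟨w', fun x hx => ?_, fun y => ?_, fun x y hxy => ?_⟩
  · obtain ⟨a, rfl⟩ : ∃ a, f a = x := by_contra fun h => hx (map_apply_of_notMem_range μ h)
    rw [map_apply_of_injective hf] at hx
    simp only [w', hf.extend_apply, tsum_extend_zero hg, hrow a hx]
  · by_cases hy : ∃ b, g b = y
    · obtain ⟨b, rfl⟩ := hy
      rw [map_apply_of_injective hg, hcol]
      refine (tsum_congr fun a => ?_).trans (hf.tsum_eq fun x hx => ?_)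
      · rw [map_apply_of_injective hf, hw'_apply]
      · by_contra h
        exact hx (by simp only [map_apply_of_notMem_range μ h, zero_mul])
    · rw [map_apply_of_notMem_range ν hy]
      refine (ENNReal.tsum_eq_zero.2 fun x => ?_).symm
      by_contra hx
      obtain ⟨a, b, -, hb, -⟩ := hw'_ne_zero x y (right_ne_zero_of_mul hx)
      exact hy ⟨b, hb⟩
  · obtain ⟨a, b, rfl, rfl, hab⟩ := hw'_ne_zero x y hxy
    exact hr a b (hw a b hab)

theorem WeightLift.prod {r' : γ → κ → Prop} {μ' : PMF γ} {ν' : PMF κ} (h : WeightLift r μ ν)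
    (h' : WeightLift r' μ' ν') :
    WeightLift (fun a b => r a.1 b.1 ∧ r' a.2 b.2) (μ.prod μ') (ν.prod ν') := by
  obtain ⟨w, hrow, hcol, hw⟩ := h
  obtain ⟨w', hrow', hcol', hw'⟩ := h'
  refine ⟨fun a b => w a.1 b.1 * w' a.2 b.2, fun a ha => ?_, fun b => ?_, fun a b hab => ?_⟩
  · rw [prod_apply, mul_ne_zero_iff] at ha
    rw [ENNReal.tsum_prod_mul, hrow _ ha.1, hrow' _ ha.2, one_mul]
  · simp_rw [prod_apply, hcol, hcol', ← ENNReal.tsum_prod_mul, mul_mul_mul_comm]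
  · rw [mul_ne_zero_iff] at hab
    exact ⟨hw _ _ hab.1, hw' _ _ hab.2⟩

end PMF

theorem distLift_iff_weightLift {X S S' : Type} {R : S → S' → Prop} {μ : PMF (Set X × S)}
    {μ' : PMF (Set X × S')} :
    distLift R μ μ' ↔ PMF.WeightLift (fun p q => p.1 = q.1 ∧ R p.2 q.2) μ μ' :=
  Iff.rfl

section RegionAutomaton

variable {L A X AP : Type} {m : B3} (𝒜 : APTA L A X AP) {s : L × Val X} {v : Val X} {a : A}
  {Φ : Set (PMF (Set X × (L × Val X)))}

theorem APTA.le_regionPre_T_iff (hm : m ≠ B3.bot) :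
    m ≤ 𝒜.regionPre.T s v a Φ ↔
      ∃ g φ t, m ≤ 𝒜.T s.1 g a φ ∧ v = valShift s.2 t ∧ v ∈ g ∧ Φ = liftConstraint v φ := by
  rcases B3.ne_bot_iff.1 hm with rfl | rfl <;>
    simp only [APTA.regionPre, B3.may_le_iff, B3.must_le_iff, B3.ne_bot_iff] <;>
    split_ifs <;> grind

theorem APTA.le_region_T_iff (hm : m ≠ B3.bot) :
    m ≤ 𝒜.region.T s v a Φ ↔ 𝒜.regionPre.Reach s ∧ m ≤ 𝒜.regionPre.T s v a Φ := by
  simp only [APTA.region]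
  split_ifs with hs
  · exact (and_iff_right hs).symm
  · simp only [hs, false_and, iff_false, not_le]
    rcases B3.ne_bot_iff.1 hm with rfl | rfl <;> decide

theorem APTA.reach_of_le_region_T {μ : PMF (Set X × (L × Val X))} {p : Set X × (L × Val X)}
    (h : B3.may ≤ 𝒜.region.T s v a Φ) (hμ : μ ∈ Φ) (hp : μ p ≠ 0) : 𝒜.regionPre.Reach p.2 :=
  have ⟨hs, hT⟩ := (𝒜.le_region_T_iff (by decide)).1 h
  RAPA.Reach.step (Y := p.1) hs (B3.may_le_iff.1 hT) hμ hp

end RegionAutomaton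

section EventClock

variable {L L1 L2 L1' L2' A AP : Type} {m : B3}

def eventTarget (a : A) (v : Val A) (l : L) : Set A × (L × Val A) :=
  (({a} : Set A), (l, valReset v {a}))

theorem eventTarget_injective (a : A) (v : Val A) : Injective (eventTarget (L := L) a v) :=
  fun _ _ h => (Prod.ext_iff.1 (Prod.ext_iff.1 h).2).1

def eventConstraint (a : A) (v : Val A) (φ : Set (PMF L)) : Set (PMF (Set A × (L × Val A))) :=
  PMF.map (eventTarget a v) '' φ

theorem liftConstraint_image_map (a : A) (v : Val A) (φ : Set (PMF L)) :
    liftConstraint v (PMF.map (fun l => (({a} : Set A), l)) '' φ) = eventConstraint a v φ := by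
  simp only [liftConstraint, eventConstraint, Set.image_image, PMF.map_comp]
  rfl

theorem APECA.le_toAPTA_T_iff (E : APECA L A AP) (hm : m ≠ B3.bot) {l : L} {g : Guard A}
    {a : A} {φh : Set (PMF (Set A × L))} :
    m ≤ E.toAPTA.T l g a φh ↔
      ∃ φ, m ≤ E.T l g a φ ∧ φh = PMF.map (fun l' => (({a} : Set A), l')) '' φ := by
  rcases B3.ne_bot_iff.1 hm with rfl | rfl <;>
    simp only [APECA.toAPTA, B3.may_le_iff, B3.must_le_iff, B3.ne_bot_iff] <;>
    split_ifs <;> grind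

def APECA.Enabled (E : APECA L A AP) (m : B3) (s : L × Val A) (v : Val A) (a : A)
    (φ : Set (PMF L)) : Prop :=
  (∃ t, v = valShift s.2 t) ∧ ∃ g, v ∈ g ∧ m ≤ E.T s.1 g a φ

theorem APECA.le_regionPre_T_iff (E : APECA L A AP) (hm : m ≠ B3.bot) {s : L × Val A}
    {v : Val A} {a : A} {Φ : Set (PMF (Set A × (L × Val A)))} :
    m ≤ E.toAPTA.regionPre.T s v a Φ ↔ ∃ φ, E.Enabled m s v a φ ∧ Φ = eventConstraint a v φ := by
  simp only [APTA.le_regionPre_T_iff _ hm, E.le_toAPTA_T_iff hm, APECA.Enabled]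
  constructor
  · rintro ⟨g, _, t, ⟨φ, hφ, rfl⟩, hv, hg, rfl⟩
    exact ⟨φ, ⟨⟨t, hv⟩, g, hg, hφ⟩, liftConstraint_image_map a v φ⟩
  · rintro ⟨φ, ⟨⟨t, hv⟩, g, hg, hφ⟩, rfl⟩
    exact ⟨g, _, t, ⟨φ, hφ, rfl⟩, hv, hg, (liftConstraint_image_map a v φ).symm⟩

theorem APECA.le_region_T_iff (E : APECA L A AP) (hm : m ≠ B3.bot) {s : L × Val A}
    {v : Val A} {a : A} {Φ : Set (PMF (Set A × (L × Val A)))} :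
    m ≤ E.region.T s v a Φ ↔
      E.toAPTA.regionPre.Reach s ∧ ∃ φ, E.Enabled m s v a φ ∧ Φ = eventConstraint a v φ := by
  rw [APECA.region, APTA.le_region_T_iff _ hm, E.le_regionPre_T_iff hm]

theorem APECA.reach_step (E : APECA L A AP) {s : L × Val A} {v : Val A} {a : A}
    {φ : Set (PMF L)} {μ : PMF L} {l : L} (hs : E.toAPTA.regionPre.Reach s)
    (he : E.Enabled B3.may s v a φ) (hμ : μ ∈ φ) (hl : μ l ≠ 0) :
    E.toAPTA.regionPre.Reach (l, valReset v {a}) :=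
  RAPA.Reach.step (Y := {a}) hs
    (B3.may_le_iff.1 ((E.le_regionPre_T_iff (by decide)).2 ⟨φ, he, rfl⟩))
    ⟨μ, hμ, rfl⟩ ((PMF.map_apply_of_injective (eventTarget_injective a v) μ l).trans_ne hl)

theorem APECA.le_par_T_iff (E1 : APECA L1 A AP) (E2 : APECA L2 A AP) (hm : m ≠ B3.bot)
    {p : L1 × L2} {g : Guard A} {a : A} {φ : Set (PMF (L1 × L2))} :
    m ≤ (E1.par E2).T p g a φ ↔
      ∃ g1 g2 φ1 φ2, m ≤ E1.T p.1 g1 a φ1 ∧ m ≤ E2.T p.2 g2 a φ2 ∧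
        g = g1 ∩ g2 ∧ φ = parConstraint φ1 φ2 := by
  rcases B3.ne_bot_iff.1 hm with rfl | rfl <;>
    simp only [APECA.par, B3.may_le_iff, B3.must_le_iff, B3.ne_bot_iff] <;>
    split_ifs <;> grind

theorem APECA.par_enabled_iff (E1 : APECA L1 A AP) (E2 : APECA L2 A AP) (hm : m ≠ B3.bot)
    {s : (L1 × L2) × Val A} {v : Val A} {a : A} {ψ : Set (PMF (L1 × L2))} :
    (E1.par E2).Enabled m s v a ψ ↔ ∃ φ1 φ2, ψ = parConstraint φ1 φ2 ∧
      E1.Enabled m (s.1.1, s.2) v a φ1 ∧ E2.Enabled m (s.1.2, s.2) v a φ2 := by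
  simp only [APECA.Enabled, E1.le_par_T_iff E2 hm]
  constructor
  · rintro ⟨ht, _, hv, g1, g2, φ1, φ2, h1, h2, rfl, rfl⟩
    exact ⟨φ1, φ2, rfl, ⟨ht, g1, hv.1, h1⟩, ⟨ht, g2, hv.2, h2⟩⟩
  · rintro ⟨φ1, φ2, rfl, ⟨ht, g1, hv1, h1⟩, -, g2, hv2, h2⟩
    exact ⟨ht, g1 ∩ g2, ⟨hv1, hv2⟩, g1, g2, φ1, φ2, h1, h2, rfl, rfl⟩

theorem mem_parConstraint_iff {φ1 : Set (PMF L1)} {φ2 : Set (PMF L2)} {μ : PMF (L1 × L2)} :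
    μ ∈ parConstraint φ1 φ2 ↔ ∃ μ1 ∈ φ1, ∃ μ2 ∈ φ2, μ = μ1.prod μ2 := by
  simp only [parConstraint, Set.mem_ofPred_eq]
  refine exists_congr fun μ1 => and_congr_right fun _ => exists_congr fun μ2 =>
    and_congr_right fun _ => ?_
  exact ⟨fun h => PMF.ext fun k => h k.1 k.2, fun h k1 k2 => by rw [h, PMF.prod_apply]⟩

theorem APECA.reach_par (E1 : APECA L1 A AP) (E2 : APECA L2 A AP) {s : (L1 × L2) × Val A}
    (h : (E1.par E2).toAPTA.regionPre.Reach s) :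
    E1.toAPTA.regionPre.Reach (s.1.1, s.2) ∧ E2.toAPTA.regionPre.Reach (s.1.2, s.2) := by
  induction h with
  | init => exact ⟨.init, .init⟩
  | step _ hT hμ hμs ih =>
    obtain ⟨ψ, hψ, rfl⟩ := ((E1.par E2).le_regionPre_T_iff (by decide)).1 (B3.may_le_iff.2 hT)
    obtain ⟨φ1, φ2, rfl, h1, h2⟩ := (E1.par_enabled_iff E2 (by decide)).1 hψ
    obtain ⟨μ, hμ, rfl⟩ := hμ
    obtain ⟨μ1, hμ1, μ2, hμ2, rfl⟩ := mem_parConstraint_iff.1 hμ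
    obtain ⟨k, hk, hks⟩ := (PMF.mem_support_map_iff _ _ _).1 ((PMF.mem_support_iff _ _).2 hμs)
    rw [PMF.mem_support_iff, PMF.prod_apply, mul_ne_zero_iff] at hk
    cases hks
    exact ⟨E1.reach_step ih.1 h1 hμ1 hk.1, E2.reach_step ih.2 h2 hμ2 hk.2⟩

theorem APECA.exists_of_le_par_region_T (E1 : APECA L1 A AP) (E2 : APECA L2 A AP)
    (hm : m ≠ B3.bot) {s : (L1 × L2) × Val A} {v : Val A} {a : A}
    {Φ : Set (PMF (Set A × ((L1 × L2) × Val A)))} (h : m ≤ (E1.par E2).region.T s v a Φ) :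
    ∃ φ1 φ2, Φ = eventConstraint a v (parConstraint φ1 φ2) ∧
      m ≤ E1.region.T (s.1.1, s.2) v a (eventConstraint a v φ1) ∧
      m ≤ E2.region.T (s.1.2, s.2) v a (eventConstraint a v φ2) := by
  obtain ⟨hs, ψ, hψ, rfl⟩ := ((E1.par E2).le_region_T_iff hm).1 h
  obtain ⟨φ1, φ2, rfl, h1, h2⟩ := (E1.par_enabled_iff E2 hm).1 hψ
  obtain ⟨hs1, hs2⟩ := E1.reach_par E2 hs
  exact ⟨φ1, φ2, rfl, (E1.le_region_T_iff hm).2 ⟨hs1, φ1, h1, rfl⟩,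
    (E2.le_region_T_iff hm).2 ⟨hs2, φ2, h2, rfl⟩⟩

theorem APECA.le_par_region_T (E1 : APECA L1 A AP) (E2 : APECA L2 A AP) (hm : m ≠ B3.bot)
    {s : (L1 × L2) × Val A} {v : Val A} {a : A} {Φ1 : Set (PMF (Set A × (L1 × Val A)))}
    {Φ2 : Set (PMF (Set A × (L2 × Val A)))} (hs : (E1.par E2).toAPTA.regionPre.Reach s)
    (h1 : m ≤ E1.region.T (s.1.1, s.2) v a Φ1) (h2 : m ≤ E2.region.T (s.1.2, s.2) v a Φ2) :
    ∃ φ1 φ2, Φ1 = eventConstraint a v φ1 ∧ Φ2 = eventConstraint a v φ2 ∧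
      m ≤ (E1.par E2).region.T s v a (eventConstraint a v (parConstraint φ1 φ2)) := by
  obtain ⟨-, φ1, he1, rfl⟩ := (E1.le_region_T_iff hm).1 h1
  obtain ⟨-, φ2, he2, rfl⟩ := (E2.le_region_T_iff hm).1 h2
  exact ⟨φ1, φ2, rfl, rfl, ((E1.par E2).le_region_T_iff hm).2
    ⟨hs, _, (E1.par_enabled_iff E2 hm).2 ⟨φ1, φ2, rfl, he1, he2⟩, rfl⟩⟩

def parRegionRel (R1 : L1 × Val A → L1' × Val A → Prop) (R2 : L2 × Val A → L2' × Val A → Prop)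
    (s : (L1 × L2) × Val A) (s' : (L1' × L2') × Val A) : Prop :=
  R1 (s.1.1, s.2) (s'.1.1, s'.2) ∧ R2 (s.1.2, s.2) (s'.1.2, s'.2)

theorem distLift_map_eventTarget_prod {a : A} {v : Val A}
    {R1 : L1 × Val A → L1' × Val A → Prop} {R2 : L2 × Val A → L2' × Val A → Prop}
    {μ1 : PMF L1} {μ2 : PMF L2} {ν1 : PMF L1'} {ν2 : PMF L2'}
    (h1 : distLift R1 (μ1.map (eventTarget a v)) (ν1.map (eventTarget a v)))
    (h2 : distLift R2 (μ2.map (eventTarget a v)) (ν2.map (eventTarget a v))) :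
    distLift (parRegionRel R1 R2) ((μ1.prod μ2).map (eventTarget a v))
      ((ν1.prod ν2).map (eventTarget a v)) :=
  have hinj {L : Type} := eventTarget_injective (L := L) a v
  (((distLift_iff_weightLift.1 h1).comap hinj hinj).prod
    ((distLift_iff_weightLift.1 h2).comap hinj hinj)).map hinj hinj
    fun _ _ ⟨⟨_, r1⟩, _, r2⟩ => ⟨rfl, r1, r2⟩

/-- Reachability is part of the relation because region automata have no transitions out of
unreachable states. -/
def APECA.parRefRel (E1 : APECA L1 A AP) (E2 : APECA L2 A AP) (E1' : APECA L1' A AP)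
    (E2' : APECA L2' A AP) (R1 : L1 × Val A → L1' × Val A → Prop)
    (R2 : L2 × Val A → L2' × Val A → Prop) (s : (L1 × L2) × Val A)
    (s' : (L1' × L2') × Val A) : Prop :=
  (E1.par E2).toAPTA.regionPre.Reach s ∧ (E1'.par E2').toAPTA.regionPre.Reach s' ∧
    parRegionRel R1 R2 s s'

theorem APECA.par_region_match {E1 : APECA L1 A AP} {E2 : APECA L2 A AP}
    {E1' : APECA L1' A AP} {E2' : APECA L2' A AP} {R1 : L1 × Val A → L1' × Val A → Prop}
    {R2 : L2 × Val A → L2' × Val A → Prop} {s : (L1 × L2) × Val A} {s' : (L1' × L2') × Val A}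
    {v : Val A} {a : A} {φ1 : Set (PMF L1)} {φ2 : Set (PMF L2)} {φ1' : Set (PMF L1')}
    {φ2' : Set (PMF L2')}
    (hT : B3.may ≤ (E1.par E2).region.T s v a (eventConstraint a v (parConstraint φ1 φ2)))
    (hT' : B3.may ≤ (E1'.par E2').region.T s' v a (eventConstraint a v (parConstraint φ1' φ2')))
    (h1 : ∀ μ ∈ eventConstraint a v φ1, ∃ μ' ∈ eventConstraint a v φ1', distLift R1 μ μ')
    (h2 : ∀ μ ∈ eventConstraint a v φ2, ∃ μ' ∈ eventConstraint a v φ2', distLift R2 μ μ') :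
    ∀ μ ∈ eventConstraint a v (parConstraint φ1 φ2),
      ∃ μ' ∈ eventConstraint a v (parConstraint φ1' φ2'),
        distLift (APECA.parRefRel E1 E2 E1' E2' R1 R2) μ μ' := by
  rintro _ ⟨μ, hμ, rfl⟩
  obtain ⟨μ1, hμ1, μ2, hμ2, rfl⟩ := mem_parConstraint_iff.1 hμ
  obtain ⟨_, ⟨ν1, hν1, rfl⟩, hd1⟩ := h1 _ ⟨μ1, hμ1, rfl⟩
  obtain ⟨_, ⟨ν2, hν2, rfl⟩, hd2⟩ := h2 _ ⟨μ2, hμ2, rfl⟩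
  have hν : ν1.prod ν2 ∈ parConstraint φ1' φ2' := mem_parConstraint_iff.2 ⟨ν1, hν1, ν2, hν2, rfl⟩
  refine ⟨_, ⟨_, hν, rfl⟩, ?_⟩
  refine (distLift_iff_weightLift.1 (distLift_map_eventTarget_prod hd1 hd2)).restrict_support.mono ?_
  rintro p q ⟨hp, hq, hpq, hR⟩
  exact ⟨hpq, APTA.reach_of_le_region_T _ hT ⟨_, hμ, rfl⟩ hp,
    APTA.reach_of_le_region_T _ hT' ⟨_, hν, rfl⟩ hq, hR⟩

theorem APECA.weakRefRel_par {E1 : APECA L1 A AP} {E2 : APECA L2 A AP}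
    {E1' : APECA L1' A AP} {E2' : APECA L2' A AP} {R1 : L1 × Val A → L1' × Val A → Prop}
    {R2 : L2 × Val A → L2' × Val A → Prop} (h1 : E1.region.WeakRefRel E1'.region R1)
    (h2 : E2.region.WeakRefRel E2'.region R2) :
    (E1.par E2).region.WeakRefRel (E1'.par E2').region (APECA.parRefRel E1 E2 E1' E2' R1 R2) := by
  rintro s s' ⟨hs, hs', hR1, hR2⟩
  have may_le_must : B3.may ≤ B3.must := by decide
  refine ⟨fun v a Φ' hΦ' => ?_, fun v a Φ hΦ => ?_, ?_⟩
  · obtain ⟨φ1', φ2', rfl, h1', h2'⟩ :=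
      E1'.exists_of_le_par_region_T E2' (by decide) (B3.must_le_iff.2 hΦ')
    obtain ⟨Φ1, hΦ1, m1⟩ := (h1 _ _ hR1).1 v a _ (B3.must_le_iff.1 h1')
    obtain ⟨Φ2, hΦ2, m2⟩ := (h2 _ _ hR2).1 v a _ (B3.must_le_iff.1 h2')
    obtain ⟨φ1, φ2, rfl, rfl, hT⟩ :=
      E1.le_par_region_T E2 (by decide) hs (B3.must_le_iff.2 hΦ1) (B3.must_le_iff.2 hΦ2)
    exact ⟨_, B3.must_le_iff.1 hT, APECA.par_region_match (may_le_must.trans hT)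
      (may_le_must.trans (B3.must_le_iff.2 hΦ')) m1 m2⟩
  · obtain ⟨φ1, φ2, rfl, h1', h2'⟩ :=
      E1.exists_of_le_par_region_T E2 (by decide) (B3.may_le_iff.2 hΦ)
    obtain ⟨Φ1', hΦ1', m1⟩ := (h1 _ _ hR1).2.1 v a _ (B3.may_le_iff.1 h1')
    obtain ⟨Φ2', hΦ2', m2⟩ := (h2 _ _ hR2).2.1 v a _ (B3.may_le_iff.1 h2')
    obtain ⟨φ1', φ2', rfl, rfl, hT'⟩ :=
      E1'.le_par_region_T E2' (by decide) hs' (B3.may_le_iff.2 hΦ1') (B3.may_le_iff.2 hΦ2')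
    exact ⟨_, B3.may_le_iff.1 hT', APECA.par_region_match (B3.may_le_iff.2 hΦ) hT' m1 m2⟩
  · rintro _ ⟨P1, hP1, P2, hP2, rfl⟩
    exact ⟨P1, (h1 _ _ hR1).2.2 hP1, P2, (h2 _ _ hR2).2.2 hP2, rfl⟩

end EventClock

end

theorem weakref_precongruence_parallel_general {L1 L2 L1' L2' A AP : Type}
    (E1 : APECA L1 A AP) (E2 : APECA L2 A AP)
    (E1' : APECA L1' A AP) (E2' : APECA L2' A AP)
    (h1 : APECA.WeakRef E1 E1') (h2 : APECA.WeakRef E2 E2') :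
    APECA.WeakRef (E1.par E2) (E1'.par E2') := by
  obtain ⟨R1, hR1, hinit1⟩ := h1
  obtain ⟨R2, hR2, hinit2⟩ := h2
  exact ⟨_, APECA.weakRefRel_par hR1 hR2, .init, .init, hinit1, hinit2⟩

/-- Theorem 7.  Weak refinement is a precongruence
w.r.t. parallel composition of APECAs. -/
theorem weakref_precongruence_parallel {L1 L2 L1' L2' A AP : Type}
    (E1 : APECA L1 A AP) (E2 : APECA L2 A AP)
    (E1' : APECA L1' A AP) (E2' : APECA L2' A AP)
    (hc1 : E1.Complete) (hc2 : E2.Complete)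
    (hc1' : E1'.Complete) (hc2' : E2'.Complete)
    (hd : APDisjoint E1 E2) (hd' : APDisjoint E1' E2')
    (h1 : APECA.WeakRef E1 E1') (h2 : APECA.WeakRef E2 E2') :
    APECA.WeakRef (E1.par E2) (E1'.par E2') :=
  weakref_precongruence_parallel_general E1 E2 E1' E2' h1 h2
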